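/- If f is a feasible flow of value at least q+n in F(Ā,B̄,c), then the selected input set I_f = { j : f((u'_j,t)) > 0 } satisfies: (Ā, B̄_{I_f}) is structurally controllable and the input cost p(I_f) = Σ_{j∈I_f} p_u(j) equals the fixed-flow cost c_f = Σ_{e : f(e)>0} c(e). -/

import Mathlib

open scoped Classical

/-- Vertices of the flow network `F(Ā,B̄)` of Algorithm 1: source `s`, sink `t`,
one vertex `N i` per non-top-linked SCC, right copies `xp k` of states, states
`x r`, inputs `u j`, and input copies `up j`. -/
inductive FV (n m q : ℕ) : Type
  | s : FV n m q
  | t : FV n m q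
  | N : Fin q → FV n m q
  | xp : Fin n → FV n m q
  | x : Fin n → FV n m q
  | u : Fin m → FV n m q
  | up : Fin m → FV n m q
  deriving DecidableEq, Fintype

variable {n m q : ℕ}

/-- Capacities of the flow network `F(Ā,B̄)`: all edges have capacity `1`,
except the edges `(u'_j, t)` which have capacity `n+1`; non-edges have
capacity `0`. `memN i r` says state `x_r` belongs to the non-top-linked SCC
`N_i`. -/
noncomputable def cap (A : Fin n → Fin n → Bool) (B : Fin n → Fin m → Bool)
    (memN : Fin q → Fin n → Bool) : FV n m q → FV n m q → ℕ
  | FV.s, FV.N _ => 1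
  | FV.s, FV.xp _ => 1
  | FV.N i, FV.up j => if ∃ r : Fin n, memN i r = true ∧ B r j = true then 1 else 0
  | FV.xp k, FV.x r => if A k r = true then 1 else 0
  | FV.xp k, FV.u j => if B k j = true then 1 else 0
  | FV.u j, FV.up j' => if j = j' then 1 else 0
  | FV.up _, FV.t => n + 1
  | FV.x _, FV.t => 1
  | _, _ => 0

/-- A feasible flow vector on `F(Ā,B̄)`: nonnegative, capacity-respecting, and
conserving flow at every vertex other than `s` and `t`. -/
def Feasible (b : FV n m q → FV n m q → ℕ) (f : FV n m q → FV n m q → ℝ) : Prop :=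
  (∀ a c, 0 ≤ f a c) ∧ (∀ a c, f a c ≤ (b a c : ℝ)) ∧
    ∀ v : FV n m q, v ≠ FV.s → v ≠ FV.t → ∑ a, f a v = ∑ c, f v c

/-- Value of a flow: total flow out of the source. -/
noncomputable def value (f : FV n m q → FV n m q → ℝ) : ℝ := ∑ v, f FV.s v

/-- Edge relation of the system bipartite graph `B(Ā,B̄)`. -/
def bipE (A : Fin n → Fin n → Bool) (B : Fin n → Fin m → Bool) :
    Fin n ⊕ Fin m → Fin n → Prop
  | Sum.inl r, k => A k r = true
  | Sum.inr j, k => B k j = true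

/-- Structural controllability of `(Ā,B̄)` (characterization used throughout the
paper): every non-top-linked SCC `N_i` receives an edge from some input, and
`B(Ā,B̄)` has a matching saturating the right vertices `x'₁,…,x'ₙ`. -/
def SCchar (A : Fin n → Fin n → Bool) (B : Fin n → Fin m → Bool)
    (memN : Fin q → Fin n → Bool) : Prop :=
  (∀ i : Fin q, ∃ j : Fin m, ∃ r : Fin n, memN i r = true ∧ B r j = true) ∧
    ∃ M : Fin n → Fin n ⊕ Fin m, Function.Injective M ∧ ∀ k : Fin n, bipE A B (M k) k

/-- Edge costs on `F(Ā,B̄,c)`: the edge `(u'_j, t)` has cost `p j`, all other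
edges have cost `0`. -/
def cost (p : Fin m → ℝ) : FV n m q → FV n m q → ℝ
  | FV.up j, FV.t => p j
  | _, _ => 0

/-- Fixed-flow cost of a flow `f`: the sum of the costs of the edges carrying
positive flow, `c_f = Σ_{e : f(e) > 0} c(e)`. -/
noncomputable def fixedCost (p : Fin m → ℝ) (f : FV n m q → FV n m q → ℝ) : ℝ :=
  ∑ a : FV n m q, ∑ c : FV n m q, if 0 < f a c then cost p a c else 0

/-!
A flow of value `q + n` saturates every edge leaving `s`. The unit entering each `x'_k` then
leaves it fractionally towards states and inputs, and since every `x_r` and every `u_j` passes on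
at most one unit, this is a fractional matching saturating `x'₁,…,x'ₙ`; Hall's theorem turns it
into a genuine one. The unit entering each `N_i` reaches `t` through some `u'_j` with an edge into
`N_i`, so that input is selected. Finally only the edges `(u'_j, t)` carry cost, so `c_f` is the
cost of the selected inputs.
-/

lemma eq_one_of_le_one_of_card_le_sum {ι : Type*} [Fintype ι] {x : ι → ℝ}
    (hle : ∀ i, x i ≤ 1) (hsum : (Fintype.card ι : ℝ) ≤ ∑ i, x i) (i : ι) : x i = 1 := by
  have hsum_eq : ∑ i, x i = ∑ _i : ι, (1 : ℝ) :=
    le_antisymm (Finset.sum_le_sum fun i _ => hle i) (by simpa using hsum)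
  exact (Finset.sum_eq_sum_iff_of_le fun i _ => hle i).1 hsum_eq i (Finset.mem_univ i)

/-- Hall's condition for the support of `w` holds because `w` is a fractional matching:
`#s = ∑_{a ∈ s} ∑_b w a b` and only the `b` adjacent to `s` contribute, each at most `1`. -/
lemma exists_injective_pos_of_sum_eq_one_of_sum_le_one {α β : Type*} [Fintype α] [Fintype β]
    (w : α → β → ℝ) (hw : ∀ a b, 0 ≤ w a b) (hrow : ∀ a, ∑ b, w a b = 1)
    (hcol : ∀ b, ∑ a, w a b ≤ 1) :
    ∃ M : α → β, Function.Injective M ∧ ∀ a, 0 < w a (M a) := by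
  let adj (a : α) : Finset β := Finset.univ.filter fun b => 0 < w a b
  have hall : ∀ s : Finset α, s.card ≤ (s.biUnion adj).card := by
    intro s
    have hzero : ∀ b ∉ s.biUnion adj, ∑ a ∈ s, w a b = 0 := by
      intro b hb
      refine Finset.sum_eq_zero fun a ha => (hw a b).antisymm' (not_lt.1 fun hpos => hb ?_)
      exact Finset.mem_biUnion.2 ⟨a, ha, Finset.mem_filter.2 ⟨Finset.mem_univ b, hpos⟩⟩
    have key : (s.card : ℝ) ≤ (s.biUnion adj).card :=
      calc (s.card : ℝ) = ∑ a ∈ s, ∑ b, w a b := by simp [hrow]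
        _ = ∑ b, ∑ a ∈ s, w a b := Finset.sum_comm
        _ = ∑ b ∈ s.biUnion adj, ∑ a ∈ s, w a b :=
          (Finset.sum_subset (Finset.subset_univ _) fun b _ hb => hzero b hb).symm
        _ ≤ ∑ _b ∈ s.biUnion adj, (1 : ℝ) := Finset.sum_le_sum fun b _ =>
          (Finset.sum_le_sum_of_subset_of_nonneg (Finset.subset_univ s)
            fun a _ _ => hw a b).trans (hcol b)
        _ = (s.biUnion adj).card := by simp
    exact_mod_cast key
  obtain ⟨M, hinj, hM⟩ := (Finset.all_card_le_biUnion_card_iff_exists_injective adj).1 hall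
  exact ⟨M, hinj, fun a => (Finset.mem_filter.1 (hM a)).2⟩

def FV.equivSum (n m q : ℕ) :
    Unit ⊕ Unit ⊕ Fin q ⊕ Fin n ⊕ Fin n ⊕ Fin m ⊕ Fin m ≃ FV n m q where
  toFun
    | .inl _ => .s
    | .inr (.inl _) => .t
    | .inr (.inr (.inl i)) => .N i
    | .inr (.inr (.inr (.inl k))) => .xp k
    | .inr (.inr (.inr (.inr (.inl r)))) => .x r
    | .inr (.inr (.inr (.inr (.inr (.inl j))))) => .u j
    | .inr (.inr (.inr (.inr (.inr (.inr j))))) => .up j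
  invFun
    | .s => .inl ()
    | .t => .inr (.inl ())
    | .N i => .inr (.inr (.inl i))
    | .xp k => .inr (.inr (.inr (.inl k)))
    | .x r => .inr (.inr (.inr (.inr (.inl r))))
    | .u j => .inr (.inr (.inr (.inr (.inr (.inl j)))))
    | .up j => .inr (.inr (.inr (.inr (.inr (.inr j)))))
  left_inv v := by rcases v with _ | _ | _ | _ | _ | _ | _ <;> rfl
  right_inv v := by cases v <;> rfl

lemma FV.sum_univ {M : Type*} [AddCommMonoid M] (g : FV n m q → M) :
    ∑ v, g v = g .s + g .t + ∑ i, g (.N i) + ∑ k, g (.xp k) + ∑ r, g (.x r) +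
      ∑ j, g (.u j) + ∑ j, g (.up j) := by
  rw [← (FV.equivSum n m q).sum_comp]
  simp only [Fintype.sum_sum_type, Fintype.sum_unique, add_assoc]
  rfl

lemma fixedCost_eq_sum_filter (p : Fin m → ℝ) (f : FV n m q → FV n m q → ℝ) :
    fixedCost p f = ∑ j ∈ Finset.univ.filter (fun j => 0 < f (FV.up j) FV.t), p j := by
  simp only [fixedCost, FV.sum_univ, cost, Finset.sum_filter]
  simp

namespace Feasible

variable {A : Fin n → Fin n → Bool} {B : Fin n → Fin m → Bool} {memN : Fin q → Fin n → Bool}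
  {f : FV n m q → FV n m q → ℝ}

lemma apply_eq_zero (hf : Feasible (cap A B memN) f) {a c : FV n m q}
    (h : cap A B memN a c = 0) : f a c = 0 :=
  (hf.1 a c).antisymm' (by simpa [h] using hf.2.1 a c)

lemma value_eq (hf : Feasible (cap A B memN) f) :
    value f = ∑ i, f .s (.N i) + ∑ k, f .s (.xp k) := by
  -- `simp [cap]` cannot evaluate the wildcard clause of `cap`, but `unfold cap; rfl` can.
  simp (disch := (unfold cap; rfl)) only [value, FV.sum_univ, hf.apply_eq_zero,
    Finset.sum_const_zero, add_zero, zero_add]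

lemma source_saturated (hf : Feasible (cap A B memN) f) (hval : (q : ℝ) + n ≤ value f) :
    (∀ i, f .s (.N i) = 1) ∧ ∀ k, f .s (.xp k) = 1 := by
  have hle : ∀ l : Fin q ⊕ Fin n,
      Sum.elim (fun i => f .s (.N i)) (fun k => f .s (.xp k)) l ≤ 1 := by
    rintro (i | k)
    · simpa [cap] using hf.2.1 .s (.N i)
    · simpa [cap] using hf.2.1 .s (.xp k)
  have hsat := eq_one_of_le_one_of_card_le_sum hle (by simpa [hf.value_eq] using hval)
  exact ⟨fun i => hsat (.inl i), fun k => hsat (.inr k)⟩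

lemma inflow_u (hf : Feasible (cap A B memN) f) (j : Fin m) :
    ∑ k, f (.xp k) (.u j) = f (.u j) (.up j) := by
  have h := hf.2.2 (.u j) (by simp) (by simp)
  simp (disch := (unfold cap; rfl)) only [FV.sum_univ, hf.apply_eq_zero,
    Finset.sum_const_zero, add_zero, zero_add] at h
  rwa [Fintype.sum_eq_single j fun j' hj' => hf.apply_eq_zero (by simp [cap, Ne.symm hj'])] at h

lemma inflow_x (hf : Feasible (cap A B memN) f) (r : Fin n) :
    ∑ k, f (.xp k) (.x r) = f (.x r) .t := by
  simpa (disch := (unfold cap; rfl)) only [FV.sum_univ, hf.apply_eq_zero,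
    Finset.sum_const_zero, add_zero, zero_add] using hf.2.2 (.x r) (by simp) (by simp)

lemma inflow_up (hf : Feasible (cap A B memN) f) (j : Fin m) :
    ∑ i, f (.N i) (.up j) + f (.u j) (.up j) = f (.up j) .t := by
  have h := hf.2.2 (.up j) (by simp) (by simp)
  simp (disch := (unfold cap; rfl)) only [FV.sum_univ, hf.apply_eq_zero,
    Finset.sum_const_zero, add_zero, zero_add] at h
  rwa [Fintype.sum_eq_single j fun j' hj' => hf.apply_eq_zero (by simp [cap, hj'])] at h

lemma outflow_N (hf : Feasible (cap A B memN) f) (hval : (q : ℝ) + n ≤ value f) (i : Fin q) :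
    ∑ j, f (.N i) (.up j) = 1 := by
  have h := hf.2.2 (.N i) (by simp) (by simp)
  simp (disch := (unfold cap; rfl)) only [FV.sum_univ, hf.apply_eq_zero,
    Finset.sum_const_zero, add_zero, zero_add] at h
  rw [← h, (hf.source_saturated hval).1 i]

lemma outflow_xp (hf : Feasible (cap A B memN) f) (hval : (q : ℝ) + n ≤ value f) (k : Fin n) :
    ∑ r, f (.xp k) (.x r) + ∑ j, f (.xp k) (.u j) = 1 := by
  have h := hf.2.2 (.xp k) (by simp) (by simp)
  simp (disch := (unfold cap; rfl)) only [FV.sum_univ, hf.apply_eq_zero,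
    Finset.sum_const_zero, add_zero, zero_add] at h
  rw [← h, (hf.source_saturated hval).2 k]

lemma up_t_pos_of_N_up_pos (hf : Feasible (cap A B memN) f) {i : Fin q} {j : Fin m}
    (h : 0 < f (.N i) (.up j)) : 0 < f (.up j) .t := by
  have hle := Finset.single_le_sum (fun i' _ => hf.1 (.N i') (.up j)) (Finset.mem_univ i)
  linarith [hf.inflow_up j, hf.1 (.u j) (.up j)]

lemma up_t_pos_of_xp_u_pos (hf : Feasible (cap A B memN) f) {k : Fin n} {j : Fin m}
    (h : 0 < f (.xp k) (.u j)) : 0 < f (.up j) .t := by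
  have hle := Finset.single_le_sum (fun k' _ => hf.1 (.xp k') (.u j)) (Finset.mem_univ k)
  have hN := Finset.sum_nonneg fun i (_ : i ∈ Finset.univ) => hf.1 (.N i) (.up j)
  linarith [hf.inflow_u j, hf.inflow_up j]

lemma exists_selected_input (hf : Feasible (cap A B memN) f) (hval : (q : ℝ) + n ≤ value f)
    (i : Fin q) : ∃ j r, memN i r = true ∧ B r j = true ∧ 0 < f (.up j) .t := by
  obtain ⟨j, -, hj⟩ := Finset.exists_lt_of_sum_lt
    (by simp [hf.outflow_N hval i] : ∑ _j : Fin m, (0 : ℝ) < ∑ j, f (.N i) (.up j))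
  have hcap : cap A B memN (.N i) (.up j) ≠ 0 := fun h0 => hj.ne' (hf.apply_eq_zero h0)
  obtain ⟨r, hr, hB⟩ : ∃ r, memN i r = true ∧ B r j = true := by
    by_contra hno
    exact hcap (by simp [cap, hno])
  exact ⟨j, r, hr, hB, hf.up_t_pos_of_N_up_pos hj⟩

/-- An edge `x'_k → u_j` carrying flow forces flow on `(u'_j, t)`, so the matching obtained from
the flow only uses selected inputs. -/
lemma exists_matching (hf : Feasible (cap A B memN) f) (hval : (q : ℝ) + n ≤ value f) :
    ∃ M : Fin n → Fin n ⊕ Fin m, Function.Injective M ∧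
      ∀ k, bipE A (fun r j => B r j && decide (0 < f (.up j) .t)) (M k) k := by
  obtain ⟨M, hinj, hM⟩ := exists_injective_pos_of_sum_eq_one_of_sum_le_one
    (fun k l => f (.xp k) (Sum.elim .x .u l)) (fun _ _ => hf.1 _ _)
    (fun k => by simpa [Fintype.sum_sum_type] using hf.outflow_xp hval k)
    (by
      rintro (r | j)
      · simpa [hf.inflow_x r, cap] using hf.2.1 (.x r) .t
      · simpa [hf.inflow_u j, cap] using hf.2.1 (.u j) (.up j))
  refine ⟨M, hinj, fun k => ?_⟩
  have hpos := hM k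
  have hcap : cap A B memN (.xp k) (Sum.elim .x .u (M k)) ≠ 0 :=
    fun h0 => hpos.ne' (hf.apply_eq_zero h0)
  rcases hMk : M k with r | j <;> rw [hMk] at hpos hcap
  · show A k r = true
    by_contra hA
    exact hcap (by simp [cap, hA])
  · have hB : B k j = true := by
      by_contra hB
      exact hcap (by simp [cap, hB])
    simp [bipE, hB, hf.up_t_pos_of_xp_u_pos hpos]

end Feasible

theorem stmt13_general (A : Fin n → Fin n → Bool) (B : Fin n → Fin m → Bool)
    (memN : Fin q → Fin n → Bool) (p : Fin m → ℝ)
    (f : FV n m q → FV n m q → ℝ) (hf : Feasible (cap A B memN) f)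
    (hval : ((q : ℝ) + n) ≤ value f) :
    SCchar A (fun r j => B r j && decide (0 < f (FV.up j) FV.t)) memN ∧
      ∑ j ∈ Finset.univ.filter (fun j : Fin m => 0 < f (FV.up j) FV.t), p j
        = fixedCost p f := by
  refine ⟨⟨fun i => ?_, hf.exists_matching hval⟩, (fixedCost_eq_sum_filter p f).symm⟩
  obtain ⟨j, r, hr, hB, hj⟩ := hf.exists_selected_input hval i
  exact ⟨j, r, hr, by simp [hB, hj]⟩

/-- Lemma 4. If `f` is a feasible flow of value at least
`q+n` in `F(Ā,B̄,c)`, then the selected input set `I_f = {j : f((u'_j,t)) > 0}`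
satisfies: `(Ā, B̄_{I_f})` is structurally controllable, and the input cost
`p(I_f) = Σ_{j ∈ I_f} p_u(j)` equals the fixed-flow cost
`c_f = Σ_{e : f(e)>0} c(e)`. -/
theorem stmt13 (A : Fin n → Fin n → Bool) (B : Fin n → Fin m → Bool)
    (memN : Fin q → Fin n → Bool) (hq : q ≤ n) (p : Fin m → ℝ)
    (f : FV n m q → FV n m q → ℝ) (hf : Feasible (cap A B memN) f)
    (hval : ((q : ℝ) + n) ≤ value f) :
    SCchar A (fun r j => B r j && decide (0 < f (FV.up j) FV.t)) memN ∧
      ∑ j ∈ Finset.univ.filter (fun j : Fin m => 0 < f (FV.up j) FV.t), p j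
        = fixedCost p f :=
  stmt13_general A B memN p f hf hval
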